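/- arXiv:1610.00151 — 2 statements merged into one kernel-verified Lean document; each statement's English description precedes it below -/
import Mathlib

section
/- Let P be a finite poset partitioned into nonempty parts P_1, …, P_n, where P_i = {e^{i,1}, …, e^{i,k_i}} and k = max_i k_i, satisfying: (EP1) for distinct i, j, if |P_i| ≥ 2 and P_j = {y}, then no x ∈ P_i satisfies x < y; and (EP2) for distinct i, j with |P_i| ≥ 2 and |P_j| ≥ 2, either no element of P_i is comparable with any element of P_j, or there exist x° ∈ P_i and y° ∈ P_j with x° < y for all y ∈ P_j ∖ {y°} and y° < x for all x ∈ P_i ∖ {x°}. Call a downward-closed subset I ⊆ P a consistent ideal if |I ∩ P_i| ≤ 1 for all i, and for such I define x(I) ∈ S_k^n by x(I)_i = α if I ∩ P_i = {e^{i,α}} and x(I)_i = 0 if I ∩ P_i = ∅. Then for all consistent ideals I, J of P: (1) I ∩ J is a consistent ideal and x(I ∩ J) = x(I) ⊓ x(J); (2) the set I ⊻ J := ⋃_{i=1}^n {p ∈ P_i : (I ∪ J) ∩ P_i = {p}} is a consistent ideal and x(I ⊻ J) = x(I) ⊔ x(J). Consequently M := {x(I) : I a consistent ideal of P} is a (⊓,⊔)-closed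 subset of S_k^n, and I ↦ x(I) is an order isomorphism from the family of consistent ideals of P ordered by inclusion onto (M, ⪯). -/
/-- The partial order on `S_k = {0,1,…,k}`: `a ⪯ b` iff `a = 0` or `a = b`. -/
def pre {k : ℕ} (a b : Fin (k + 1)) : Prop := a = 0 ∨ a = b

instance {k : ℕ} (a b : Fin (k + 1)) : Decidable (pre a b) :=
  decidable_of_iff (a = 0 ∨ a = b) Iff.rfl

/-- The componentwise order `⪯` on `S_k^n`. -/
def preV {k n : ℕ} (x y : Fin n → Fin (k + 1)) : Prop := ∀ i, pre (x i) (y i)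

/-- The operation `⊓` on `S_k^n`. -/
def sqcap {k n : ℕ} (x y : Fin n → Fin (k + 1)) : Fin n → Fin (k + 1) :=
  fun i => if pre (x i) (y i) ∨ pre (y i) (x i) then min (x i) (y i) else 0

/-- The operation `⊔` on `S_k^n`. -/
def sqcup {k n : ℕ} (x y : Fin n → Fin (k + 1)) : Fin n → Fin (k + 1) :=
  fun i => if pre (x i) (y i) ∨ pre (y i) (x i) then max (x i) (y i) else 0

/-- A `(⊓,⊔)`-closed subset of `S_k^n`. -/
def closedSet {k n : ℕ} (M : Set (Fin n → Fin (k + 1))) : Prop :=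
  M.Nonempty ∧ ∀ x ∈ M, ∀ y ∈ M, sqcap x y ∈ M ∧ sqcup x y ∈ M

/-- A consistent ideal of the PIP `P` (with parts given by `idx`): a
downward-closed subset containing at most one element of each part `P_i`. -/
def consIdealP {n : ℕ} {P : Type} [PartialOrder P] (idx : P → Fin n)
    (I : Set P) : Prop :=
  (∀ p q : P, p ≤ q → q ∈ I → p ∈ I) ∧
  (∀ p ∈ I, ∀ q ∈ I, idx p = idx q → p = q)

/-- `v = x(I)`: `v i = α` if `I ∩ P_i = {e^{i,α}}` and `v i = 0` if
`I ∩ P_i = ∅`. -/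
def xOfIdeal {k n : ℕ} {P : Type} (idx : P → Fin n) (pos : P → Fin (k + 1))
    (I : Set P) (v : Fin n → Fin (k + 1)) : Prop :=
  ∀ i, (∃ p ∈ I, idx p = i ∧ v i = pos p) ∨ ((∀ p ∈ I, idx p ≠ i) ∧ v i = 0)

/-- `I ⊻ J`: the elements `p` such that `(I ∪ J) ∩ P_{idx p} = {p}`. -/
def pJoin {n : ℕ} {P : Type} (idx : P → Fin n) (I J : Set P) : Set P :=
  {p | p ∈ I ∪ J ∧ ∀ q ∈ I ∪ J, idx q = idx p → q = p}

lemma pJoin_comm {n : ℕ} {P : Type} (idx : P → Fin n) (I J : Set P) :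
    pJoin idx I J = pJoin idx J I := by
  ext p
  simp only [pJoin, Set.mem_setOf_eq, Set.union_comm I J]

lemma pJoin_down {n : ℕ} {P : Type} [PartialOrder P] (idx : P → Fin n)
    (hEP1 : ∀ i j : Fin n, i ≠ j →
      (∃ q q' : P, idx q = i ∧ idx q' = i ∧ q ≠ q') →
      ∀ y : P, idx y = j → (∀ q : P, idx q = j → q = y) →
        ∀ x : P, idx x = i → ¬ x < y)
    (hEP2 : ∀ i j : Fin n, i ≠ j →
      (∃ q q' : P, idx q = i ∧ idx q' = i ∧ q ≠ q') →
      (∃ q q' : P, idx q = j ∧ idx q' = j ∧ q ≠ q') →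
      (∀ x y : P, idx x = i → idx y = j → ¬ x ≤ y ∧ ¬ y ≤ x) ∨
      (∃ x0 y0 : P, idx x0 = i ∧ idx y0 = j ∧
        (∀ y : P, idx y = j → y ≠ y0 → x0 < y) ∧
        (∀ x : P, idx x = i → x ≠ x0 → y0 < x)))
    (I J : Set P) (hI : consIdealP idx I) (hJ : consIdealP idx J)
    (p q : P) (hpq : p ≤ q) (hq : q ∈ pJoin idx I J) (hqI : q ∈ I) :
    p ∈ pJoin idx I J := by
  obtain ⟨hqU, hquniq⟩ := hq
  rcases hpq.lt_or_eq with hlt | heq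
  · have hpI : p ∈ I := hI.1 p q hpq hqI
    refine ⟨Or.inl hpI, ?_⟩
    intro r hr hrid
    by_contra hrp
    have hrJ : r ∈ J := by
      rcases hr with hrI | hrJ
      · exact absurd (hI.2 r hrI p hpI hrid) hrp
      · exact hrJ
    have hij : idx p ≠ idx q := by
      intro h
      exact hlt.ne (hI.2 p hpI q hqI h)
    have htwo_i : ∃ a b : P, idx a = idx p ∧ idx b = idx p ∧ a ≠ b :=
      ⟨r, p, hrid, rfl, hrp⟩
    by_cases hsing : ∀ s : P, idx s = idx q → s = q
    · exact hEP1 (idx p) (idx q) hij htwo_i q rfl hsing p rfl hlt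
    · push_neg at hsing
      obtain ⟨s, hs, hsq⟩ := hsing
      have htwo_j : ∃ a b : P, idx a = idx q ∧ idx b = idx q ∧ a ≠ b :=
        ⟨s, q, hs, rfl, hsq⟩
      rcases hEP2 (idx p) (idx q) hij htwo_i htwo_j with hnone | ⟨x0, y0, hx0, hy0, h1, h2⟩
      · exact (hnone p q rfl rfl).1 hpq
      · have hp : p = x0 := by
          by_contra hne
          have hy0p : y0 < p := h2 p rfl hne
          have hy0I : y0 ∈ I := hI.1 y0 p hy0p.le hpI
          have : y0 = q := hquniq y0 (Or.inl hy0I) hy0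
          exact lt_asymm hlt (this ▸ hy0p)
        have hrx0 : r ≠ x0 := hp ▸ hrp
        have hy0r : y0 < r := h2 r hrid hrx0
        have hy0J : y0 ∈ J := hJ.1 y0 r hy0r.le hrJ
        have hy0q : y0 = q := hquniq y0 (Or.inr hy0J) hy0
        have hqr : q < r := hy0q ▸ hy0r
        have hpJ : p ∈ J := hJ.1 p r (hlt.trans hqr).le hrJ
        exact hrp (hJ.2 r hrJ p hpJ hrid)
  · exact heq ▸ ⟨hqU, hquniq⟩

/-- Theorem (elementary PIP gives a `(⊓,⊔)`-closed set): for a finite poset `P`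
partitioned into nonempty parts `P_i = idx⁻¹ i` whose elements are enumerated by
nonzero labels `pos` and satisfying (EP1) and (EP2), the consistent ideals are
closed under `∩` and `⊻`, these operations correspond to `⊓` and `⊔` under
`I ↦ x(I)`, the image `M` of `x(·)` is a `(⊓,⊔)`-closed subset of `S_k^n`, and
`I ↦ x(I)` is an order isomorphism onto `(M, ⪯)`. -/
theorem elementary_pip_gives_closedSet (k n : ℕ) (hk : 0 < k) (hn : 0 < n)
    (P : Type) [Fintype P] [PartialOrder P]
    (idx : P → Fin n) (pos : P → Fin (k + 1))
    (hpos : ∀ p, pos p ≠ 0)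
    (hposinj : ∀ p q : P, idx p = idx q → pos p = pos q → p = q)
    (hparts : ∀ i : Fin n, ∃ p, idx p = i)
    (hEP1 : ∀ i j : Fin n, i ≠ j →
      (∃ q q' : P, idx q = i ∧ idx q' = i ∧ q ≠ q') →
      ∀ y : P, idx y = j → (∀ q : P, idx q = j → q = y) →
        ∀ x : P, idx x = i → ¬ x < y)
    (hEP2 : ∀ i j : Fin n, i ≠ j →
      (∃ q q' : P, idx q = i ∧ idx q' = i ∧ q ≠ q') →
      (∃ q q' : P, idx q = j ∧ idx q' = j ∧ q ≠ q') →
      (∀ x y : P, idx x = i → idx y = j → ¬ x ≤ y ∧ ¬ y ≤ x) ∨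
      (∃ x0 y0 : P, idx x0 = i ∧ idx y0 = j ∧
        (∀ y : P, idx y = j → y ≠ y0 → x0 < y) ∧
        (∀ x : P, idx x = i → x ≠ x0 → y0 < x))) :
    (∀ I J : Set P, consIdealP idx I → consIdealP idx J →
      consIdealP idx (I ∩ J) ∧ consIdealP idx (pJoin idx I J) ∧
      ∀ v w, xOfIdeal idx pos I v → xOfIdeal idx pos J w →
        xOfIdeal idx pos (I ∩ J) (sqcap v w) ∧
        xOfIdeal idx pos (pJoin idx I J) (sqcup v w)) ∧
    closedSet {v | ∃ I, consIdealP idx I ∧ xOfIdeal idx pos I v} ∧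
    (∀ I J v w, consIdealP idx I → consIdealP idx J →
      xOfIdeal idx pos I v → xOfIdeal idx pos J w → (I ⊆ J ↔ preV v w)) := by
  have hinter : ∀ I J : Set P, consIdealP idx I → consIdealP idx J →
      consIdealP idx (I ∩ J) := by
    intro I J hI hJ
    exact ⟨fun p q hpq hq => ⟨hI.1 p q hpq hq.1, hJ.1 p q hpq hq.2⟩,
      fun p hp q hq h => hI.2 p hp.1 q hq.1 h⟩
  have hjoin : ∀ I J : Set P, consIdealP idx I → consIdealP idx J →
      consIdealP idx (pJoin idx I J) := by
    intro I J hI hJ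
    constructor
    · intro p q hpq hq
      rcases hq.1 with hqI | hqJ
      · exact pJoin_down idx hEP1 hEP2 I J hI hJ p q hpq hq hqI
      · rw [pJoin_comm] at hq ⊢
        exact pJoin_down idx hEP1 hEP2 J I hJ hI p q hpq hq hqJ
    · intro p hp q hq h
      exact hq.2 p hp.1 h
  have hcap : ∀ I J : Set P, consIdealP idx I → consIdealP idx J →
      ∀ v w, xOfIdeal idx pos I v → xOfIdeal idx pos J w →
      xOfIdeal idx pos (I ∩ J) (sqcap v w) := by
    intro I J hI hJ v w hv hw i
    rcases hv i with ⟨p, hpI, hpi, hvi⟩ | ⟨hIe, hvi⟩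
    · rcases hw i with ⟨q, hqJ, hqi, hwi⟩ | ⟨hJe, hwi⟩
      · by_cases hpq : p = q
        · subst hpq
          left
          refine ⟨p, ⟨hpI, hqJ⟩, hpi, ?_⟩
          have hcond : pre (v i) (w i) ∨ pre (w i) (v i) :=
            Or.inl (Or.inr (hvi.trans hwi.symm))
          show (if pre (v i) (w i) ∨ pre (w i) (v i) then min (v i) (w i) else 0) = pos p
          rw [if_pos hcond, hvi, hwi, min_self]
        · right
          have hcond : ¬(pre (v i) (w i) ∨ pre (w i) (v i)) := by
            rintro (h | h) <;> rcases h with h | h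
            · exact hpos p (hvi ▸ h)
            · exact hpq (hposinj p q (hpi.trans hqi.symm) (by rw [← hvi, ← hwi, h]))
            · exact hpos q (hwi ▸ h)
            · exact hpq (hposinj p q (hpi.trans hqi.symm) (by rw [← hvi, ← hwi, h]))
          constructor
          · intro s hs hsi
            have h1 : s = p := hI.2 s hs.1 p hpI (hsi.trans hpi.symm)
            have h2 : s = q := hJ.2 s hs.2 q hqJ (hsi.trans hqi.symm)
            exact hpq (h1 ▸ h2)
          · show (if pre (v i) (w i) ∨ pre (w i) (v i) then min (v i) (w i) else 0) = 0
            rw [if_neg hcond]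
      · right
        refine ⟨fun s hs => hJe s hs.2, ?_⟩
        have hcond : pre (v i) (w i) ∨ pre (w i) (v i) := Or.inr (Or.inl hwi)
        show (if pre (v i) (w i) ∨ pre (w i) (v i) then min (v i) (w i) else 0) = 0
        rw [if_pos hcond, hwi]
        exact min_eq_right (Fin.zero_le _)
    · right
      refine ⟨fun s hs => hIe s hs.1, ?_⟩
      show (if pre (v i) (w i) ∨ pre (w i) (v i) then min (v i) (w i) else 0) = 0
      have hcond : pre (v i) (w i) ∨ pre (w i) (v i) := Or.inl (Or.inl hvi)
      rw [if_pos hcond, hvi]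
      exact min_eq_left (Fin.zero_le _)
  have hcup : ∀ I J : Set P, consIdealP idx I → consIdealP idx J →
      ∀ v w, xOfIdeal idx pos I v → xOfIdeal idx pos J w →
      xOfIdeal idx pos (pJoin idx I J) (sqcup v w) := by
    intro I J hI hJ v w hv hw i
    rcases hv i with ⟨p, hpI, hpi, hvi⟩ | ⟨hIe, hvi⟩
    · rcases hw i with ⟨q, hqJ, hqi, hwi⟩ | ⟨hJe, hwi⟩
      · by_cases hpq : p = q
        · subst hpq
          left
          refine ⟨p, ⟨Or.inl hpI, ?_⟩, hpi, ?_⟩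
          · intro r hr hri
            rcases hr with hrI | hrJ
            · exact hI.2 r hrI p hpI hri
            · exact hJ.2 r hrJ p hqJ hri
          · have hcond : pre (v i) (w i) ∨ pre (w i) (v i) :=
              Or.inl (Or.inr (hvi.trans hwi.symm))
            show (if pre (v i) (w i) ∨ pre (w i) (v i) then max (v i) (w i) else 0) = pos p
            rw [if_pos hcond, hvi, hwi, max_self]
        · right
          have hcond : ¬(pre (v i) (w i) ∨ pre (w i) (v i)) := by
            rintro (h | h) <;> rcases h with h | h
            · exact hpos p (hvi ▸ h)
            · exact hpq (hposinj p q (hpi.trans hqi.symm) (by rw [← hvi, ← hwi, h]))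
            · exact hpos q (hwi ▸ h)
            · exact hpq (hposinj p q (hpi.trans hqi.symm) (by rw [← hvi, ← hwi, h]))
          constructor
          · intro s hs hsi
            have h1 : p = s := hs.2 p (Or.inl hpI) (hpi.trans hsi.symm)
            have h2 : q = s := hs.2 q (Or.inr hqJ) (hqi.trans hsi.symm)
            exact hpq (h1.trans h2.symm)
          · show (if pre (v i) (w i) ∨ pre (w i) (v i) then max (v i) (w i) else 0) = 0
            rw [if_neg hcond]
      · left
        refine ⟨p, ⟨Or.inl hpI, ?_⟩, hpi, ?_⟩
        · intro r hr hri
          rcases hr with hrI | hrJ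
          · exact hI.2 r hrI p hpI hri
          · exact absurd (hri.trans hpi) (hJe r hrJ)
        · have hcond : pre (v i) (w i) ∨ pre (w i) (v i) := Or.inr (Or.inl hwi)
          show (if pre (v i) (w i) ∨ pre (w i) (v i) then max (v i) (w i) else 0) = pos p
          rw [if_pos hcond, hwi, ← hvi]
          exact max_eq_left (Fin.zero_le _)
    · rcases hw i with ⟨q, hqJ, hqi, hwi⟩ | ⟨hJe, hwi⟩
      · left
        refine ⟨q, ⟨Or.inr hqJ, ?_⟩, hqi, ?_⟩
        · intro r hr hri
          rcases hr with hrI | hrJ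
          · exact absurd (hri.trans hqi) (hIe r hrI)
          · exact hJ.2 r hrJ q hqJ hri
        · have hcond : pre (v i) (w i) ∨ pre (w i) (v i) := Or.inl (Or.inl hvi)
          show (if pre (v i) (w i) ∨ pre (w i) (v i) then max (v i) (w i) else 0) = pos q
          rw [if_pos hcond, hvi, ← hwi]
          exact max_eq_right (Fin.zero_le _)
      · right
        refine ⟨fun s hs => ?_, ?_⟩
        · rcases hs.1 with h | h
          · exact hIe s h
          · exact hJe s h
        · have hcond : pre (v i) (w i) ∨ pre (w i) (v i) := Or.inl (Or.inl hvi)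
          show (if pre (v i) (w i) ∨ pre (w i) (v i) then max (v i) (w i) else 0) = 0
          rw [if_pos hcond, hvi, hwi, max_self]
  refine ⟨fun I J hI hJ => ⟨hinter I J hI hJ, hjoin I J hI hJ,
    fun v w hv hw => ⟨hcap I J hI hJ v w hv hw, hcup I J hI hJ v w hv hw⟩⟩, ?_, ?_⟩
  · constructor
    · refine ⟨fun _ => 0, ∅, ⟨fun p q _ hq => absurd hq (Set.notMem_empty q),
        fun p hp => absurd hp (Set.notMem_empty p)⟩, fun i =>
        Or.inr ⟨fun p hp => absurd hp (Set.notMem_empty p), rfl⟩⟩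
    · rintro v ⟨I, hI, hv⟩ w ⟨J, hJ, hw⟩
      exact ⟨⟨I ∩ J, hinter I J hI hJ, hcap I J hI hJ v w hv hw⟩,
        ⟨pJoin idx I J, hjoin I J hI hJ, hcup I J hI hJ v w hv hw⟩⟩
  · intro I J v w hI hJ hv hw
    constructor
    · intro hIJ i
      rcases hv i with ⟨p, hpI, hpi, hvi⟩ | ⟨_, hvi⟩
      · have hpJ : p ∈ J := hIJ hpI
        rcases hw i with ⟨q, hqJ, hqi, hwi⟩ | ⟨hJe, _⟩
        · have : q = p := hJ.2 q hqJ p hpJ (hqi.trans hpi.symm)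
          exact Or.inr (by rw [hvi, hwi, this])
        · exact absurd hpi (hJe p hpJ)
      · exact Or.inl hvi
    · intro hpre p hpI
      rcases hv (idx p) with ⟨p', hp'I, hp'i, hvi⟩ | ⟨hIe, _⟩
      · have hpp : p' = p := hI.2 p' hp'I p hpI hp'i
        subst hpp
        rcases hpre (idx p') with h0 | hvw
        · exact absurd (hvi ▸ h0) (hpos p')
        · rcases hw (idx p') with ⟨q, hqJ, hqi, hwi⟩ | ⟨_, hwi⟩
          · have : q = p' := hposinj q p' hqi (by rw [← hwi, ← hvw, hvi])
            exact this ▸ hqJ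
          · exact absurd (by rw [← hvi, hvw, hwi]) (hpos p')
      · exact absurd rfl (hIe p hpI)
end

section
/- Let M ⊆ S_k^n be a (⊓,⊔)-closed set. Then all maximal elements of (M, ⪯) have the same support: if x and y are both maximal in M, then supp x = supp y. -/
/-- Strict version of `⪯`. -/
def strictPreV {k n : ℕ} (x y : Fin n → Fin (k + 1)) : Prop := preV x y ∧ x ≠ y

/-- `m` is the minimum element of `M` with respect to `⪯`. -/
def isMinOf {k n : ℕ} (M : Set (Fin n → Fin (k + 1))) (m : Fin n → Fin (k + 1)) : Prop :=
  m ∈ M ∧ ∀ x ∈ M, preV m x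

/-- `u` is the least upper bound of `S` inside `(M, ⪯)`. -/
def isLUBof {k n : ℕ} (M S : Set (Fin n → Fin (k + 1))) (u : Fin n → Fin (k + 1)) : Prop :=
  u ∈ M ∧ (∀ s ∈ S, preV s u) ∧ ∀ w ∈ M, (∀ s ∈ S, preV s w) → preV u w

/-- `x` is a join-irreducible element of `M`. -/
def joinIrr {k n : ℕ} (M : Set (Fin n → Fin (k + 1))) (x : Fin n → Fin (k + 1)) : Prop :=
  x ∈ M ∧ ¬ isMinOf M x ∧ ¬ isLUBof M {y | y ∈ M ∧ strictPreV y x} x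

/-- A `(⊓,⊔)`-closed set is simple if its minimum element is the all-zero vector. -/
def simpleSet {k n : ℕ} (M : Set (Fin n → Fin (k + 1))) : Prop :=
  isMinOf M (fun _ => 0)

/-- `y` is a lower cover of `x` in `M`. -/
def lowerCover {k n : ℕ} (M : Set (Fin n → Fin (k + 1)))
    (y x : Fin n → Fin (k + 1)) : Prop :=
  y ∈ M ∧ strictPreV y x ∧ ¬ ∃ z ∈ M, strictPreV y z ∧ strictPreV z x

/-- `d` is the differential of `x` in `M` (with respect to some lower cover of `x`). -/
def isDiff {k n : ℕ} (M : Set (Fin n → Fin (k + 1)))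
    (x d : Fin n → Fin (k + 1)) : Prop :=
  ∃ y, lowerCover M y x ∧ ∀ i, d i = if x i ≠ 0 ∧ y i = 0 then x i else 0

/-- The support of `x ∈ S_k^n`. -/
def supp {k n : ℕ} (x : Fin n → Fin (k + 1)) : Set (Fin n) := {i | x i ≠ 0}

/-- `x ⌣ y`: `x` and `y` have no common upper bound in `S_k^n`. -/
def incons {k n : ℕ} (x y : Fin n → Fin (k + 1)) : Prop :=
  ∃ i, x i ≠ 0 ∧ y i ≠ 0 ∧ x i ≠ y i

section

variable {k n : ℕ}

lemma sqcup_apply (x y : Fin n → Fin (k + 1)) (i : Fin n) :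
    sqcup x y i = if pre (x i) (y i) ∨ pre (y i) (x i) then max (x i) (y i) else 0 :=
  rfl

lemma sqcup_sqcup_apply (x y : Fin n → Fin (k + 1)) (i : Fin n) :
    sqcup y (sqcup x y) i = if y i = 0 then x i else y i := by
  by_cases hy : y i = 0
  · simp [sqcup, pre, hy]
  by_cases hx : x i = 0
  · simp [sqcup, pre, hx]
  by_cases hxy : x i = y i
  · simp [sqcup, pre, hxy]
  have hincomp : ¬ (pre (x i) (y i) ∨ pre (y i) (x i)) := by
    simp only [pre, not_or]
    exact ⟨⟨hx, hxy⟩, hy, Ne.symm hxy⟩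
  have hzero : sqcup x y i = 0 := if_neg hincomp
  rw [sqcup_apply, hzero]
  simp [pre, hy]

lemma preV_sqcup_sqcup (x y : Fin n → Fin (k + 1)) : preV y (sqcup y (sqcup x y)) := by
  intro i
  by_cases hy : y i = 0
  · exact Or.inl hy
  · exact Or.inr (by rw [sqcup_sqcup_apply, if_neg hy])

lemma supp_subset_of_maximal {M : Set (Fin n → Fin (k + 1))}
    (hM : ∀ x ∈ M, ∀ y ∈ M, sqcup x y ∈ M) {a b : Fin n → Fin (k + 1)}
    (ha : a ∈ M) (hb : b ∈ M) (hbmax : ¬ ∃ z ∈ M, strictPreV b z) :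
    supp a ⊆ supp b := by
  have hmem : sqcup b (sqcup a b) ∈ M := hM b hb _ (hM a ha b hb)
  have hfix : sqcup b (sqcup a b) = b := by
    by_contra hne
    exact hbmax ⟨_, hmem, preV_sqcup_sqcup a b, Ne.symm hne⟩
  intro i hai hbi
  have hai' := congrFun hfix i
  rw [sqcup_sqcup_apply, if_pos hbi] at hai'
  exact hai (hai'.trans hbi)

end

theorem maximal_same_support_general (k n : ℕ)
    (M : Set (Fin n → Fin (k + 1))) (hM : closedSet M)
    (x y : Fin n → Fin (k + 1)) (hx : x ∈ M) (hy : y ∈ M)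
    (hxmax : ¬ ∃ z ∈ M, strictPreV x z)
    (hymax : ¬ ∃ z ∈ M, strictPreV y z) :
    supp x = supp y :=
  have hsqcup : ∀ a ∈ M, ∀ b ∈ M, sqcup a b ∈ M := fun a ha b hb => (hM.2 a ha b hb).2
  (supp_subset_of_maximal hsqcup hx hy hymax).antisymm (supp_subset_of_maximal hsqcup hy hx hxmax)

/-- All maximal elements of a `(⊓,⊔)`-closed set have the same support. -/
theorem maximal_same_support (k n : ℕ) (hk : 0 < k) (hn : 0 < n)
    (M : Set (Fin n → Fin (k + 1))) (hM : closedSet M)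
    (x y : Fin n → Fin (k + 1)) (hx : x ∈ M) (hy : y ∈ M)
    (hxmax : ¬ ∃ z ∈ M, strictPreV x z)
    (hymax : ¬ ∃ z ∈ M, strictPreV y z) :
    supp x = supp y :=
  maximal_same_support_general k n M hM x y hx hy hxmax hymax
end
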